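/- Let λ ∈ ℝ and α ∈ ℝ with α ≠ 0 and α² ≠ 3/4, and consider the three-dimensional ELKO spinor system (dust case w = 0): x' = -3x + x·[2√3·zx - 3(1-z²-x²-y²) - 6x²]/(2(z²-1)) + (√3/2)z + √(3/2)λy² - αz², y' = y·[2√3·zx - 3(1-z²-x²-y²) - 6x²]/(2(z²-1)) - √(3/2)λxy, z' = (√3/2)x, defined for z² ≠ 1. Then: (i) the origin O = (0,0,0) is an equilibrium, and the Jacobian matrix there has eigenvalues 3/2, (-3+√21)/4 and -(3+√21)/4, hence O is a hyperbolic saddle representing a matter-dominated universe (w_eff = 0); (ii) the point B = (0, 0, √3/(2α)) is an equilibrium, and the Jacobian matrix there has eigenvalues 3/2, (-3+i√3)/4 and (-3-i√3)/4, hence B is an unstable (saddle-focus) equilibrium; both eigenvalue sets are independent of λ and α. -/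

import Mathlib

/-!
On the `z`-axis (`x = y = 0`, `z² ≠ 1`) the factor `S` equals `3/2`, and the Jacobian has the
block shape `!![-3/2, 0, √3/2 - 2αz; 0, 3/2, 0; √3/2, 0, 0]`. Its characteristic polynomial is
`(X - 3/2) (X² + 3/2 X - (√3/2)(√3/2 - 2αz))`; the constant term of the quadratic factor is
`-3/4` at `O` (`z = 0`) and `+3/4` at `B` (`2αz = √3`), which gives the two stated triples of
roots, independently of `λ` and `α`.
-/

open Polynomial

/-- The auxiliary quantity `S` of the ELKO spinor system (dust case `w = 0`). -/
noncomputable def S19 (x y z : ℝ) : ℝ :=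
  (2 * Real.sqrt 3 * z * x - 3 * (1 - z ^ 2 - x ^ 2 - y ^ 2) - 6 * x ^ 2) / (2 * (z ^ 2 - 1))

/-- `x`-component of the ELKO spinor vector field with coupling `q = αz²`. -/
noncomputable def E19x (lam α x y z : ℝ) : ℝ :=
  -3 * x + x * S19 x y z + Real.sqrt 3 / 2 * z + Real.sqrt (3 / 2) * lam * y ^ 2 - α * z ^ 2

/-- `y`-component of the ELKO spinor vector field. -/
noncomputable def E19y (lam x y z : ℝ) : ℝ :=
  y * S19 x y z - Real.sqrt (3 / 2) * lam * x * y

/-- `z`-component of the ELKO spinor vector field. -/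
noncomputable def E19z (x : ℝ) : ℝ := Real.sqrt 3 / 2 * x

/-- Jacobian matrix of the ELKO spinor system at `(x₀, y₀, z₀)`. -/
noncomputable def jac19 (lam α : ℝ) (x₀ y₀ z₀ : ℝ) : Matrix (Fin 3) (Fin 3) ℝ :=
  !![deriv (fun x => E19x lam α x y₀ z₀) x₀, deriv (fun y => E19x lam α x₀ y z₀) y₀,
       deriv (fun z => E19x lam α x₀ y₀ z) z₀;
     deriv (fun x => E19y lam x y₀ z₀) x₀, deriv (fun y => E19y lam x₀ y z₀) y₀,
       deriv (fun z => E19y lam x₀ y₀ z) z₀;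
     deriv (fun x => E19z x) x₀, deriv (fun _y => E19z x₀) y₀, deriv (fun _z => E19z x₀) z₀]

theorem charpoly_of_block {R : Type*} [CommRing R] (a b c d r₁ r₂ : R)
    (hsum : r₁ + r₂ = a) (hprod : r₁ * r₂ = -(b * c)) :
    (!![a, 0, b; 0, d, 0; c, 0, 0] : Matrix (Fin 3) (Fin 3) R).charpoly
      = (X - C d) * (X - C r₁) * (X - C r₂) := by
  subst hsum
  have hC : C b * C c = -(C r₁ * C r₂) := by rw [← C_mul, ← C_mul, hprod, map_neg, neg_neg]
  rw [Matrix.charpoly, Matrix.det_fin_three]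
  simp only [Matrix.charmatrix_apply_eq, Matrix.charmatrix_apply_ne, ne_eq, Fin.reduceEq,
    not_false_eq_true, Matrix.of_apply, Matrix.cons_val', Matrix.cons_val_zero,
    Matrix.cons_val_one, Matrix.cons_val_fin_one, Matrix.cons_val, map_zero, map_add]
  linear_combination (-(X - C d)) * hC

theorem hasDerivAt_id_mul_at_zero {𝕜 : Type*} [NontriviallyNormedField 𝕜] {g : 𝕜 → 𝕜}
    (hg : DifferentiableAt 𝕜 g 0) : HasDerivAt (fun t => t * g t) (g 0) 0 := by
  simpa using (hasDerivAt_id' 0).fun_mul hg.hasDerivAt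

theorem S19_zero_zero {z : ℝ} (hz : z ^ 2 ≠ 1) : S19 0 0 z = 3 / 2 := by
  have : z ^ 2 - 1 ≠ 0 := sub_ne_zero.mpr hz
  rw [S19]; field_simp; ring

theorem differentiable_S19_fst (y z : ℝ) : Differentiable ℝ (fun x => S19 x y z) := by
  unfold S19; fun_prop

theorem differentiable_S19_snd (x z : ℝ) : Differentiable ℝ (fun y => S19 x y z) := by
  unfold S19; fun_prop

theorem E19x_zero_zero (lam α z : ℝ) : E19x lam α 0 0 z = √3 / 2 * z - α * z ^ 2 := by
  simp [E19x]

theorem E19y_zero_zero (lam z : ℝ) : E19y lam 0 0 z = 0 := by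
  simp [E19y]

theorem jac19_zero_zero (lam α : ℝ) {z : ℝ} (hz : z ^ 2 ≠ 1) :
    jac19 lam α 0 0 z =
      !![-(3 / 2), 0, √3 / 2 - 2 * α * z; 0, 3 / 2, 0; √3 / 2, 0, 0] := by
  have hxx : HasDerivAt (fun x => E19x lam α x 0 z) (-3 + S19 0 0 z) 0 := by
    have hf : (fun x => E19x lam α x 0 z)
        = fun x => -3 * x + x * S19 x 0 z + (√3 / 2 * z - α * z ^ 2) := by
      funext x; simp only [E19x]; ring
    rw [hf]
    exact ((((hasDerivAt_id' 0).const_mul (-3)).fun_add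
      (hasDerivAt_id_mul_at_zero (differentiable_S19_fst 0 z 0))).add_const _).congr_deriv
      (by ring)
  have hxy : HasDerivAt (fun y => E19x lam α 0 y z) 0 0 := by
    have hf : (fun y => E19x lam α 0 y z)
        = fun y => √(3 / 2) * lam * y ^ 2 + (√3 / 2 * z - α * z ^ 2) := by
      funext y; simp only [E19x]; ring
    rw [hf]
    exact (((hasDerivAt_pow 2 0).const_mul _).add_const _).congr_deriv (by simp)
  have hxz : HasDerivAt (fun z => E19x lam α 0 0 z) (√3 / 2 - 2 * α * z) z := by
    simp only [E19x_zero_zero]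
    exact (((hasDerivAt_id' z).const_mul _).fun_sub ((hasDerivAt_pow 2 z).const_mul α)).congr_deriv
      (by simp only [mul_one, Nat.cast_ofNat, Nat.add_one_sub_one, pow_one]; ring)
  have hyy : HasDerivAt (fun y => E19y lam 0 y z) (S19 0 0 z) 0 := by
    simpa [E19y] using hasDerivAt_id_mul_at_zero (differentiable_S19_snd 0 z 0)
  have hzx : HasDerivAt (fun x => E19z x) (√3 / 2) 0 := by
    simpa [E19z] using (hasDerivAt_id' (0:ℝ)).const_mul (√3 / 2)
  simp only [jac19, hxx.deriv, hxy.deriv, hxz.deriv, hyy.deriv, hzx.deriv, S19_zero_zero hz,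
    E19y_zero_zero]
  norm_num [E19y]

theorem charpoly_jac19_origin (lam α : ℝ) :
    (jac19 lam α 0 0 0).charpoly
      = (X - C (3 / 2)) * (X - C ((-3 + √21) / 4)) * (X - C ((-3 - √21) / 4)) := by
  rw [jac19_zero_zero lam α (by norm_num), mul_zero, sub_zero]
  refine charpoly_of_block _ _ _ _ _ _ (by ring) ?_
  linear_combination (-1 / 16) * Real.sq_sqrt (show (0 : ℝ) ≤ 21 by norm_num)
    + (1 / 4) * Real.sq_sqrt (show (0 : ℝ) ≤ 3 by norm_num)

theorem charpoly_jac19_pointB (lam α : ℝ) (hα : α ≠ 0) (hα2 : α ^ 2 ≠ 3 / 4) :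
    ((jac19 lam α 0 0 (√3 / (2 * α))).map Complex.ofReal).charpoly
      = (X - C (3 / 2)) * (X - C ((-3 + Complex.I * (√3 : ℂ)) / 4))
          * (X - C ((-3 - Complex.I * (√3 : ℂ)) / 4)) := by
  have h3 : √3 ^ 2 = 3 := Real.sq_sqrt (by norm_num)
  have hz : (√3 / (2 * α)) ^ 2 ≠ 1 := by
    rw [div_pow, h3, ne_eq, div_eq_one_iff_eq (by positivity)]
    contrapose! hα2
    linarith
  have hentry : √3 / 2 - 2 * α * (√3 / (2 * α)) = -(√3 / 2) := by
    field_simp; ring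
  have hmap : (!![-(3 / 2), 0, -(√3 / 2); 0, 3 / 2, 0; √3 / 2, 0, 0] :
      Matrix (Fin 3) (Fin 3) ℝ).map Complex.ofReal
        = !![-(3 / 2), 0, -((√3 : ℂ) / 2); 0, 3 / 2, 0; (√3 : ℂ) / 2, 0, 0] := by
    ext i j; fin_cases i <;> fin_cases j <;> simp
  rw [jac19_zero_zero lam α hz, hentry, hmap]
  refine charpoly_of_block _ _ _ _ _ _ (by ring) ?_
  have h3C : (√3 : ℂ) ^ 2 = 3 := by exact_mod_cast h3
  linear_combination (-3 / 16) * Complex.I_sq - (1 / 4 + Complex.I ^ 2 / 16) * h3C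

/-- ELKO spinor dark energy with coupling `q = αz²` (dust case): the origin `O` and the point
`B = (0, 0, √3/(2α))` are equilibria; the Jacobian at `O` has eigenvalues
`3/2, (-3+√21)/4, -(3+√21)/4` (hyperbolic saddle, matter dominated), and the Jacobian at `B`
has eigenvalues `3/2, (-3±i√3)/4` (unstable saddle-focus); both eigenvalue sets are
independent of `λ` and `α`. -/
theorem elko_spinor_critical_points (lam α : ℝ) (hα : α ≠ 0) (hα2 : α ^ 2 ≠ 3 / 4) :
    (E19x lam α 0 0 0 = 0 ∧ E19y lam 0 0 0 = 0 ∧ E19z 0 = 0) ∧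
    (E19x lam α 0 0 (Real.sqrt 3 / (2 * α)) = 0 ∧
      E19y lam 0 0 (Real.sqrt 3 / (2 * α)) = 0 ∧ E19z 0 = 0) ∧
    (jac19 lam α 0 0 0).charpoly
      = (X - C (3 / 2)) * (X - C ((-3 + Real.sqrt 21) / 4))
          * (X - C ((-3 - Real.sqrt 21) / 4)) ∧
    ((jac19 lam α 0 0 (Real.sqrt 3 / (2 * α))).map Complex.ofReal).charpoly
      = (X - C (3 / 2)) * (X - C ((-3 + Complex.I * (Real.sqrt 3 : ℂ)) / 4))
          * (X - C ((-3 - Complex.I * (Real.sqrt 3 : ℂ)) / 4)) := by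
  have hE19z : E19z 0 = 0 := by simp [E19z]
  have hB : E19x lam α 0 0 (√3 / (2 * α)) = 0 := by
    rw [E19x_zero_zero]
    field_simp
    ring
  exact ⟨⟨by simp [E19x_zero_zero], E19y_zero_zero lam 0, hE19z⟩,
    ⟨hB, E19y_zero_zero lam _, hE19z⟩,
    charpoly_jac19_origin lam α, charpoly_jac19_pointB lam α hα hα2⟩
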